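/- Let G₁ and G₂ be Lie groups, Λ: G₁ → G₂ a smooth group homomorphism, and let λ: T_1G₁ → T_1G₂ be the differential of Λ at the identity. For every smooth curve ξ: ℝ → T_1G₁ with development g: ℝ → G₁, the curve Λ ∘ g: ℝ → G₂ is the development of λ ∘ ξ; that is, ∫₀ᵗ(λ ∘ ξ) = Λ(∫₀ᵗξ) for all t ∈ ℝ. -/

import Mathlib

/-!
A homomorphism intertwines right translations, `R_{Λ a} ∘ Λ = Λ ∘ R_a`, so by the chain rule the
logarithmic derivative of `Λ ∘ g` is `dΛ₁` applied to that of `g`; hence `Λ ∘ g` develops `dΛ₁ ∘ ξ`.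
Developments are unique: if `h` and `k = h * u` both develop `ξ`, the product rule
`k' = dR_u h' + dL_h u'` together with `dR_u (dR_h ξ) = dR_k ξ` forces `dL_h u' = 0`, so `u` is
constant, equal to `u 0 = 1`.
-/

open scoped Manifold

/-- The logarithmic derivative of a smooth curve `g : ℝ → G` in a Lie group, evaluated on the
standard unit tangent vector `∂/∂t`. -/
noncomputable def curveLogDeriv
    {E : Type*} [NormedAddCommGroup E] [NormedSpace ℝ E]
    {H : Type*} [TopologicalSpace H] (I : ModelWithCorners ℝ E H)
    {G : Type*} [TopologicalSpace G] [ChartedSpace H G] [Group G] [LieGroup I (⊤ : ℕ∞) G]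
    (g : ℝ → G) (t : ℝ) : TangentSpace I (1 : G) :=
  mfderiv I I (fun h : G => h * (g t)⁻¹) (g t) (mfderiv 𝓘(ℝ, ℝ) I g t (1 : ℝ))

/-- `g : ℝ → G` is the development of the curve `ξ : ℝ → T₁G`: it is smooth, starts at the
identity, and has logarithmic derivative `ξ`. One writes `∫₀ᵗ ξ := g t`. -/
def IsDevelopment
    {E : Type*} [NormedAddCommGroup E] [NormedSpace ℝ E]
    {H : Type*} [TopologicalSpace H] (I : ModelWithCorners ℝ E H)
    {G : Type*} [TopologicalSpace G] [ChartedSpace H G] [Group G] [LieGroup I (⊤ : ℕ∞) G]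
    (ξ : ℝ → TangentSpace I (1 : G)) (g : ℝ → G) : Prop :=
  ContMDiff 𝓘(ℝ, ℝ) I (⊤ : ℕ∞) g ∧ g 0 = 1 ∧ ∀ t : ℝ, curveLogDeriv I g t = ξ t

section Constancy

variable {F : Type*} [NormedAddCommGroup F] [NormedSpace ℝ F]
  {E : Type*} [NormedAddCommGroup E] [NormedSpace ℝ E]
  {H : Type*} [TopologicalSpace H] {I : ModelWithCorners ℝ E H}
  {M : Type*} [TopologicalSpace M] [ChartedSpace H M] [IsManifold I 1 M]

theorem isLocallyConstant_of_mfderiv_eq_zero {f : F → M} (hf : MDifferentiable 𝓘(ℝ, F) I f)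
    (hf' : ∀ x, mfderiv 𝓘(ℝ, F) I f x = 0) : IsLocallyConstant f := by
  rw [IsLocallyConstant.iff_eventually_eq]
  intro x₀
  set φ := extChartAt I (f x₀)
  obtain ⟨ε, hε, hball⟩ := Metric.isOpen_iff.1
    ((chartAt H (f x₀)).open_source.preimage hf.continuous) x₀ (mem_chart_source H (f x₀))
  have hφf : ∀ x ∈ Metric.ball x₀ ε, HasFDerivAt (φ ∘ f) (0 : F →L[ℝ] E) x := by
    intro x hx
    have hfx : HasMFDerivAt 𝓘(ℝ, F) I f x 0 := hf' x ▸ (hf x).hasMFDerivAt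
    have hφfx := (hasMFDerivAt_extChartAt (hball hx)).comp x hfx
    erw [ContinuousLinearMap.comp_zero] at hφfx
    exact hasMFDerivAt_iff_hasFDerivAt.1 hφfx
  filter_upwards [Metric.ball_mem_nhds x₀ hε] with x hx
  refine φ.injOn (by simpa [φ] using hball hx) (mem_extChartAt_source _) ?_
  refine (convex_ball x₀ ε).is_const_of_fderivWithin_eq_zero
    (fun y hy => (hφf y hy).differentiableAt.differentiableWithinAt) (fun y hy => ?_) hx
    (Metric.mem_ball_self hε)
  rw [fderivWithin_of_isOpen Metric.isOpen_ball hy, (hφf y hy).fderiv]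

end Constancy

section Translations

variable {𝕜 : Type*} [NontriviallyNormedField 𝕜]
  {E : Type*} [NormedAddCommGroup E] [NormedSpace 𝕜 E]
  {H : Type*} [TopologicalSpace H] {I : ModelWithCorners 𝕜 E H}
  {E' : Type*} [NormedAddCommGroup E'] [NormedSpace 𝕜 E']
  {H' : Type*} [TopologicalSpace H'] {I' : ModelWithCorners 𝕜 E' H'}

section Monoid

variable {G : Type*} [TopologicalSpace G] [ChartedSpace H G] [Monoid G] [ContMDiffMul I 1 G]

theorem mfderiv_mul_apply {M : Type*} [TopologicalSpace M] [ChartedSpace H' M] {f g : M → G}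
    {x : M} (hf : MDifferentiableAt I' I f x) (hg : MDifferentiableAt I' I g x)
    (v : TangentSpace I' x) :
    mfderiv I' I (fun y => f y * g y) x v =
      mfderiv I I (· * g x) (f x) (mfderiv I' I f x v) +
        mfderiv I I (f x * ·) (g x) (mfderiv I' I g x v) := by
  have hmul : MDifferentiableAt (I.prod I) I (fun p : G × G => p.1 * p.2) (f x, g x) :=
    (contMDiff_mul I 1).mdifferentiableAt one_ne_zero
  rw [show (fun y => f y * g y) = (fun p : G × G => p.1 * p.2) ∘ (fun y => (f y, g y)) from rfl,
    mfderiv_comp_apply x hmul (hf.prodMk hg), hf.mfderiv_prod hg, mfderiv_prod_eq_add_apply hmul]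
  rfl

theorem mfderiv_mul_right_apply_mfderiv_mul_right {x y : G} (a b : G) (hy : x * a = y)
    (v : TangentSpace I x) :
    mfderiv I I (· * b) y (mfderiv I I (· * a) x v) = mfderiv I I (· * (a * b)) x v := by
  rw [← mfderiv_comp_apply_of_eq x mdifferentiableAt_mul_right mdifferentiableAt_mul_right hy]
  congr 2
  funext z
  exact mul_assoc z a b

theorem mfderiv_mul_right_apply_mfderiv_monoidHom {G' : Type*} [TopologicalSpace G']
    [ChartedSpace H' G'] [Monoid G'] [ContMDiffMul I' 1 G'] (Λ : G →* G')
    (hΛ : MDifferentiable I I' Λ) {x y : G} (a : G) (hy : x * a = y) (v : TangentSpace I x) :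
    mfderiv I' I' (· * Λ a) (Λ x) (mfderiv I I' Λ x v) =
      mfderiv I I' Λ y (mfderiv I I (· * a) x v) := by
  rw [← mfderiv_comp_apply x mdifferentiableAt_mul_right (hΛ x),
    ← mfderiv_comp_apply_of_eq x (hΛ y) mdifferentiableAt_mul_right hy]
  congr 2
  funext z
  exact (map_mul Λ z a).symm

end Monoid

theorem mfderiv_mul_left_injective {G : Type*} [TopologicalSpace G] [ChartedSpace H G] [Group G]
    [ContMDiffMul I 1 G] (a x : G) : Function.Injective (mfderiv I I (a * ·) x) := by
  have hinv : ∀ v : TangentSpace I x,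
      mfderiv I I (a⁻¹ * ·) (a * x) (mfderiv I I (a * ·) x v) = v := by
    intro v
    have hid : (a⁻¹ * ·) ∘ (a * ·) = @id G := funext (inv_mul_cancel_left a)
    rw [← mfderiv_comp_apply x mdifferentiableAt_mul_left mdifferentiableAt_mul_left, hid,
      mfderiv_id]
    rfl
  intro v w hvw
  rw [← hinv v, ← hinv w, hvw]

end Translations

section Development

variable {E : Type*} [NormedAddCommGroup E] [NormedSpace ℝ E]
  {H : Type*} [TopologicalSpace H] {I : ModelWithCorners ℝ E H}
  {G : Type*} [TopologicalSpace G] [ChartedSpace H G] [Group G] [LieGroup I (⊤ : ℕ∞) G]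
  {E' : Type*} [NormedAddCommGroup E'] [NormedSpace ℝ E']
  {H' : Type*} [TopologicalSpace H'] {I' : ModelWithCorners ℝ E' H'}
  {G' : Type*} [TopologicalSpace G'] [ChartedSpace H' G'] [Group G'] [LieGroup I' (⊤ : ℕ∞) G']

theorem mfderiv_apply_one_eq_mfderiv_mul_right_curveLogDeriv (g : ℝ → G) (t : ℝ) :
    mfderiv 𝓘(ℝ, ℝ) I g t (1 : ℝ) = mfderiv I I (· * g t) 1 (curveLogDeriv I g t) := by
  have hid : (fun z : G => z * ((g t)⁻¹ * g t)) = id := funext fun z => by simp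
  rw [curveLogDeriv, mfderiv_mul_right_apply_mfderiv_mul_right _ _ (mul_inv_cancel (g t)), hid,
    mfderiv_id]
  rfl

theorem IsDevelopment.mfderiv_apply_one {ξ : ℝ → TangentSpace I (1 : G)} {g : ℝ → G}
    (hg : IsDevelopment I ξ g) (t : ℝ) :
    mfderiv 𝓘(ℝ, ℝ) I g t (1 : ℝ) = mfderiv I I (· * g t) 1 (ξ t) := by
  rw [mfderiv_apply_one_eq_mfderiv_mul_right_curveLogDeriv, hg.2.2 t]

theorem IsDevelopment.unique {ξ : ℝ → TangentSpace I (1 : G)} {h k : ℝ → G}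
    (hh : IsDevelopment I ξ h) (hk : IsDevelopment I ξ k) : h = k := by
  obtain ⟨u, rfl⟩ : ∃ u : ℝ → G, k = fun s => h s * u s :=
    ⟨fun s => (h s)⁻¹ * k s, funext fun s => (mul_inv_cancel_left _ _).symm⟩
  have hh_diff : MDifferentiable 𝓘(ℝ, ℝ) I h := hh.1.mdifferentiable (by simp)
  have hu_diff : MDifferentiable 𝓘(ℝ, ℝ) I u := by
    have hu : ContMDiff 𝓘(ℝ, ℝ) I (⊤ : ℕ∞) fun s => (h s)⁻¹ * (h s * u s) := hh.1.inv.mul hk.1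
    simp only [inv_mul_cancel_left] at hu
    exact hu.mdifferentiable (by simp)
  have hu' : ∀ s, mfderiv 𝓘(ℝ, ℝ) I u s = 0 := by
    intro s
    refine ContinuousLinearMap.ext_ring (mfderiv_mul_left_injective (h s) (u s) ?_)
    have hprod : mfderiv I I (· * (h s * u s)) 1 (ξ s) =
        mfderiv I I (· * u s) (h s) (mfderiv I I (· * h s) 1 (ξ s)) +
          mfderiv I I (h s * ·) (u s) (mfderiv 𝓘(ℝ, ℝ) I u s (1 : ℝ)) := by
      rw [← hh.mfderiv_apply_one]
      exact (hk.mfderiv_apply_one s).symm.trans (mfderiv_mul_apply (hh_diff s) (hu_diff s) 1)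
    rw [mfderiv_mul_right_apply_mfderiv_mul_right _ _ (one_mul _)] at hprod
    exact (left_eq_add.mp hprod).trans (map_zero _).symm
  have hu_one : ∀ s, u s = 1 := fun s => by
    rw [(isLocallyConstant_of_mfderiv_eq_zero hu_diff hu').apply_eq_of_preconnectedSpace s 0]
    simpa [hh.2.1] using hk.2.1
  funext s
  rw [hu_one, mul_one]

theorem curveLogDeriv_map (Λ : G →* G') (hΛ : MDifferentiable I I' Λ) {g : ℝ → G} {t : ℝ}
    (hg : MDifferentiableAt 𝓘(ℝ, ℝ) I g t) :
    curveLogDeriv I' (fun s => Λ (g s)) t = mfderiv I I' Λ 1 (curveLogDeriv I g t) := by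
  have hchain : mfderiv 𝓘(ℝ, ℝ) I' (fun s => Λ (g s)) t (1 : ℝ) =
      mfderiv I I' Λ (g t) (mfderiv 𝓘(ℝ, ℝ) I g t (1 : ℝ)) :=
    mfderiv_comp_apply t (hΛ (g t)) hg 1
  rw [curveLogDeriv, curveLogDeriv, hchain, ← map_inv,
    mfderiv_mul_right_apply_mfderiv_monoidHom Λ hΛ _ (mul_inv_cancel (g t))]

theorem IsDevelopment.map {ξ : ℝ → TangentSpace I (1 : G)} {g : ℝ → G} (hg : IsDevelopment I ξ g)
    (Λ : G →* G') (hΛ : ContMDiff I I' (⊤ : ℕ∞) Λ) :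
    IsDevelopment I' (fun t => mfderiv I I' Λ 1 (ξ t)) (fun t => Λ (g t)) := by
  refine ⟨hΛ.comp hg.1, by simp [hg.2.1], fun t => ?_⟩
  rw [curveLogDeriv_map Λ (hΛ.mdifferentiable (by simp)) (hg.1.mdifferentiableAt (by simp)),
    hg.2.2 t]

end Development

theorem development_homomorphism_general
    {E₁ : Type*} [NormedAddCommGroup E₁] [NormedSpace ℝ E₁]
    {H₁ : Type*} [TopologicalSpace H₁] (I₁ : ModelWithCorners ℝ E₁ H₁)
    {G₁ : Type*} [TopologicalSpace G₁] [ChartedSpace H₁ G₁] [Group G₁] [LieGroup I₁ (⊤ : ℕ∞) G₁]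
    {E₂ : Type*} [NormedAddCommGroup E₂] [NormedSpace ℝ E₂]
    {H₂ : Type*} [TopologicalSpace H₂] (I₂ : ModelWithCorners ℝ E₂ H₂)
    {G₂ : Type*} [TopologicalSpace G₂] [ChartedSpace H₂ G₂] [Group G₂] [LieGroup I₂ (⊤ : ℕ∞) G₂]
    (Λ : G₁ →* G₂) (hΛ : ContMDiff I₁ I₂ (⊤ : ℕ∞) Λ)
    (ξ : ℝ → TangentSpace I₁ (1 : G₁))
    (g : ℝ → G₁) (hg : IsDevelopment I₁ ξ g) :
    IsDevelopment I₂ (fun t => mfderiv I₁ I₂ Λ (1 : G₁) (ξ t)) (fun t => Λ (g t)) ∧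
      ∀ h : ℝ → G₂, IsDevelopment I₂ (fun t => mfderiv I₁ I₂ Λ (1 : G₁) (ξ t)) h →
        ∀ t : ℝ, h t = Λ (g t) :=
  ⟨hg.map Λ hΛ, fun _ hh => congrFun (hh.unique (hg.map Λ hΛ))⟩

/-- A smooth group homomorphism `Λ : G₁ → G₂` with differential `λ := d Λ₁` at the identity
maps developments to developments: `Λ ∘ g` is the development of `λ ∘ ξ`, i.e.
`∫₀ᵗ (λ ∘ ξ) = Λ (∫₀ᵗ ξ)` for all `t`. -/
theorem development_homomorphism
    {E₁ : Type*} [NormedAddCommGroup E₁] [NormedSpace ℝ E₁]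
    {H₁ : Type*} [TopologicalSpace H₁] (I₁ : ModelWithCorners ℝ E₁ H₁)
    {G₁ : Type*} [TopologicalSpace G₁] [ChartedSpace H₁ G₁] [Group G₁] [LieGroup I₁ (⊤ : ℕ∞) G₁]
    {E₂ : Type*} [NormedAddCommGroup E₂] [NormedSpace ℝ E₂]
    {H₂ : Type*} [TopologicalSpace H₂] (I₂ : ModelWithCorners ℝ E₂ H₂)
    {G₂ : Type*} [TopologicalSpace G₂] [ChartedSpace H₂ G₂] [Group G₂] [LieGroup I₂ (⊤ : ℕ∞) G₂]
    (Λ : G₁ →* G₂) (hΛ : ContMDiff I₁ I₂ (⊤ : ℕ∞) Λ)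
    (ξ : ℝ → TangentSpace I₁ (1 : G₁))
    (hξ : ContMDiff 𝓘(ℝ, ℝ) 𝓘(ℝ, E₁) (⊤ : ℕ∞) (fun t => show E₁ from ξ t))
    (g : ℝ → G₁) (hg : IsDevelopment I₁ ξ g) :
    IsDevelopment I₂ (fun t => mfderiv I₁ I₂ Λ (1 : G₁) (ξ t)) (fun t => Λ (g t)) ∧
      ∀ h : ℝ → G₂, IsDevelopment I₂ (fun t => mfderiv I₁ I₂ Λ (1 : G₁) (ξ t)) h →
        ∀ t : ℝ, h t = Λ (g t) :=
  development_homomorphism_general I₁ I₂ Λ hΛ ξ g hg
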